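/- arXiv:hep-th/9710082 — 6 statements merged into one kernel-verified Lean document; each statement's English description precedes it below -/
import Mathlib

section
/- A real 3×3 matrix A satisfies the two conditions (i) ∑_{α,β} A_{αβ}² = 3 and (ii) ∑_{α,γ,β,δ} ε_{αγη} ε_{βδθ} A_{αβ} A_{γδ} = 2 A_{ηθ} for all η, θ (where ε is the Levi-Civita symbol on three indices) if and only if A belongs to SO(3), i.e. AᵀA = 1 and det A = 1. -/
/-!
The contraction `½ ∑ ε_{αγη} ε_{βδθ} A_{αβ} A_{γδ}` is the cofactor `(adj A)_{θη}`, so condition (ii)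
says `adj A = Aᵀ`. Then `Aᵀ A = adj A · A = (det A) · 1`, and taking traces, condition (i) reads
`3 = 3 det A`; hence `det A = 1` and `Aᵀ A = 1`. Conversely, for `A ∈ SO(3)` the adjugate is
`(det A) A⁻¹ = Aᵀ`, and `∑ A_{αβ}² = tr (Aᵀ A) = 3`.
-/

open Matrix

/-- The Levi-Civita symbol on three indices, with `eps3 0 1 2 = 1`
(corresponding to `ε₁₂₃ = 1` in 1-based notation). -/
noncomputable def eps3 (a b c : Fin 3) : ℝ :=
  ((b.val : ℝ) - (a.val : ℝ)) * ((c.val : ℝ) - (a.val : ℝ)) *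
    ((c.val : ℝ) - (b.val : ℝ)) / 2

namespace Matrix

variable {m n R : Type*} [Fintype m] [Fintype n]

theorem sum_sum_sq_eq_trace_transpose_mul_self [CommSemiring R] (A : Matrix m n R) :
    ∑ i, ∑ j, A i j ^ 2 = (Aᵀ * A).trace := by
  simp only [trace, diag, mul_apply, transpose_apply, sq]
  exact Finset.sum_comm

variable [DecidableEq n]

theorem adjugate_eq_transpose_of_transpose_mul_self_eq_one [CommRing R] {A : Matrix n n R}
    (hA : Aᵀ * A = 1) (hdet : A.det = 1) : A.adjugate = Aᵀ := by
  simpa [inv_def, hdet] using inv_eq_left_inv hA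

theorem det_eq_one_of_adjugate_eq_transpose [Field R] [CharZero R] [Nonempty n]
    {A : Matrix n n R} (hadj : A.adjugate = Aᵀ) (htr : (Aᵀ * A).trace = Fintype.card n) :
    A.det = 1 := by
  rw [← hadj, adjugate_mul, trace_smul, trace_one, smul_eq_mul] at htr
  have hcard : (Fintype.card n : R) ≠ 0 := Nat.cast_ne_zero.mpr Fintype.card_ne_zero
  exact mul_left_cancel₀ hcard (by rw [mul_comm, htr, mul_one])

end Matrix

theorem levi_civita_contraction_eq_adjugate (A : Matrix (Fin 3) (Fin 3) ℝ) (η θ : Fin 3) :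
    ∑ α, ∑ γ, ∑ β, ∑ δ, eps3 α γ η * eps3 β δ θ * A α β * A γ δ = 2 * A.adjugate θ η := by
  simp only [Fin.sum_univ_three, adjugate_fin_three]
  fin_cases η <;> fin_cases θ <;> norm_num [eps3] <;> ring

theorem levi_civita_contraction_eq_two_mul_iff (A : Matrix (Fin 3) (Fin 3) ℝ) :
    (∀ η θ, ∑ α, ∑ γ, ∑ β, ∑ δ, eps3 α γ η * eps3 β δ θ * A α β * A γ δ = 2 * A η θ) ↔
      A.adjugate = Aᵀ := by
  simp only [levi_civita_contraction_eq_adjugate, mul_right_inj' (two_ne_zero' ℝ), ← ext_iff,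
    transpose_apply]
  exact forall_comm

/-- A real 3×3 matrix `A` satisfies `∑ A_{αβ}² = 3` and
`∑ ε_{αγη} ε_{βδθ} A_{αβ} A_{γδ} = 2 A_{ηθ}` iff `A ∈ SO(3)`. -/
theorem stmt0 (A : Matrix (Fin 3) (Fin 3) ℝ) :
    ((∑ α, ∑ β, (A α β) ^ 2 = 3) ∧
      (∀ η θ, ∑ α, ∑ γ, ∑ β, ∑ δ,
        eps3 α γ η * eps3 β δ θ * A α β * A γ δ = 2 * A η θ)) ↔
    (Aᵀ * A = 1 ∧ A.det = 1) := by
  rw [levi_civita_contraction_eq_two_mul_iff, sum_sum_sq_eq_trace_transpose_mul_self]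
  constructor
  · rintro ⟨htr, hadj⟩
    have hdet : A.det = 1 := det_eq_one_of_adjugate_eq_transpose hadj (by simpa using htr)
    refine ⟨?_, hdet⟩
    rw [← hadj, adjugate_mul, hdet, one_smul]
  · rintro ⟨hA, hdet⟩
    refine ⟨?_, adjugate_eq_transpose_of_transpose_mul_self_eq_one hA hdet⟩
    rw [hA, trace_one]
    norm_num
end

section
/- If a real 3×3 matrix A satisfies ∑ ε_{αγη} ε_{βδθ} A_{αβ} A_{γδ} = 2 A_{ηθ} for all η, θ, then AᵀA = AAᵀ = (det A)·1. -/
open Matrix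

/-- The `ε`-formula for the cofactor matrix `cof A = (adj A)ᵀ`. -/
theorem sum_eps3_mul_eps3_mul_mul_eq_two_mul_adjugate (A : Matrix (Fin 3) (Fin 3) ℝ)
    (η θ : Fin 3) :
    ∑ α, ∑ γ, ∑ β, ∑ δ, eps3 α γ η * eps3 β δ θ * A α β * A γ δ = 2 * adjugate A θ η := by
  fin_cases η <;> fin_cases θ <;>
    simp only [Fin.sum_univ_three, eps3, adjugate_fin_three, Fin.reduceFinMk, Fin.isValue, of_apply,
      cons_val, Fin.val_zero, Fin.val_one, Fin.val_two, Nat.cast_zero, Nat.cast_one,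
      Nat.cast_ofNat] <;>
    ring

/-- If `∑ ε_{αγη} ε_{βδθ} A_{αβ} A_{γδ} = 2 A_{ηθ}` then
`AᵀA = AAᵀ = (det A)·1`. -/
theorem stmt1 (A : Matrix (Fin 3) (Fin 3) ℝ)
    (hA : ∀ η θ, ∑ α, ∑ γ, ∑ β, ∑ δ,
      eps3 α γ η * eps3 β δ θ * A α β * A γ δ = 2 * A η θ) :
    Aᵀ * A = A.det • (1 : Matrix (Fin 3) (Fin 3) ℝ) ∧
      A * Aᵀ = A.det • (1 : Matrix (Fin 3) (Fin 3) ℝ) := by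
  have adjugate_eq_transpose : adjugate A = Aᵀ := by
    ext θ η
    have h := hA η θ
    rw [sum_eps3_mul_eps3_mul_mul_eq_two_mul_adjugate] at h
    simpa using h
  exact ⟨adjugate_eq_transpose ▸ adjugate_mul A, adjugate_eq_transpose ▸ mul_adjugate A⟩
end

section
/- If real 3×3 matrices A and B each satisfy the identity ∑ ε_{αγη} ε_{βδθ} M_{αβ} M_{γδ} = 2 M_{ηθ} (with M = A and M = B respectively), then the product AB also satisfies this identity. -/
open Matrix

/-!
The double Levi-Civita contraction `∑ ε_{αγη} ε_{βδθ} M_{αβ} M_{γδ}` is `2 (adj M)_{θη}`,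
so the identity says exactly that `adj M = Mᵀ`. This property is closed under products
because both `adj` and `ᵀ` reverse products: `adj (A B) = adj B · adj A = Bᵀ Aᵀ = (A B)ᵀ`.
-/

theorem sum_eps3_mul_eps3_eq_two_mul_adjugate (M : Matrix (Fin 3) (Fin 3) ℝ)
    (η θ : Fin 3) :
    ∑ α, ∑ γ, ∑ β, ∑ δ, eps3 α γ η * eps3 β δ θ * M α β * M γ δ =
      2 * M.adjugate θ η := by
  fin_cases η <;> fin_cases θ <;>
    simp [adjugate_fin_three, Fin.sum_univ_three, eps3] <;> ring

theorem sum_eps3_mul_eps3_eq_two_mul_iff_adjugate_eq_transpose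
    (M : Matrix (Fin 3) (Fin 3) ℝ) :
    (∀ η θ, ∑ α, ∑ γ, ∑ β, ∑ δ,
      eps3 α γ η * eps3 β δ θ * M α β * M γ δ = 2 * M η θ) ↔
      M.adjugate = Mᵀ := by
  simp only [sum_eps3_mul_eps3_eq_two_mul_adjugate, mul_right_inj' (two_ne_zero : (2 : ℝ) ≠ 0)]
  exact ⟨fun h => ext fun i j => h j i, fun h η θ => by rw [h, transpose_apply]⟩

/-- If `A` and `B` each satisfy `∑ ε_{αγη} ε_{βδθ} M_{αβ} M_{γδ} = 2 M_{ηθ}`,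
then so does the product `A * B`. -/
theorem stmt2 (A B : Matrix (Fin 3) (Fin 3) ℝ)
    (hA : ∀ η θ, ∑ α, ∑ γ, ∑ β, ∑ δ,
      eps3 α γ η * eps3 β δ θ * A α β * A γ δ = 2 * A η θ)
    (hB : ∀ η θ, ∑ α, ∑ γ, ∑ β, ∑ δ,
      eps3 α γ η * eps3 β δ θ * B α β * B γ δ = 2 * B η θ) :
    ∀ η θ, ∑ α, ∑ γ, ∑ β, ∑ δ,
      eps3 α γ η * eps3 β δ θ * (A * B) α β * (A * B) γ δ = 2 * (A * B) η θ := by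
  rw [sum_eps3_mul_eps3_eq_two_mul_iff_adjugate_eq_transpose] at hA hB ⊢
  rw [adjugate_mul_distrib, hA, hB, transpose_mul]
end

section
/- Every Lie algebra automorphism of ℝ³ equipped with the cross product bracket is given by an SO(3) matrix; that is, if φ : ℝ³ → ℝ³ is a linear bijection with φ(x × y) = φ(x) × φ(y) for all x, y, then the matrix of φ is orthogonal with determinant 1. -/
/-!
The images `cᵢ = f eᵢ` of the standard basis are the rows of `Aᵀ`, where `A` is the matrix of `f`,
and satisfy `cᵢ × cᵢ₊₁ = cᵢ₊₂` (indices mod 3). Hence the rows are pairwise orthogonal and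
`cᵢ ⬝ cᵢ = cᵢ ⬝ (cᵢ₊₁ × cᵢ₊₂) = det A`, so `AᵀA = (det A) • 1`. Lagrange's identity
`|c₀ × c₁|² = |c₀|² |c₁|² - (c₀ ⬝ c₁)²` turns `c₂ ⬝ c₂ = det A` into `det A = (det A)²`,
and `det A` is a unit because `f` is bijective, so `det A = 1`.
-/

open Matrix

variable {R : Type*} [CommRing R]

section CrossCyclic

variable {B : Matrix (Fin 3) (Fin 3) R}

theorem dotProduct_rows_of_cross_cyclic (h : ∀ i, B i ⨯₃ B (i + 1) = B (i + 2)) (i j : Fin 3) :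
    B i ⬝ᵥ B j = if i = j then B.det else 0 := by
  have h01 : B 0 ⨯₃ B 1 = B 2 := h 0
  have h12 : B 1 ⨯₃ B 2 = B 0 := h 1
  have h20 : B 2 ⨯₃ B 0 = B 1 := h 2
  have hdet : B 0 ⬝ᵥ B 1 ⨯₃ B 2 = B.det := by
    rw [triple_product_eq_det]; congr 1; ext k; fin_cases k <;> rfl
  have h00 : B 0 ⬝ᵥ B 0 = B.det := by rw [← hdet, h12]
  have h11 : B 1 ⬝ᵥ B 1 = B.det := by rw [← hdet, triple_product_permutation, h20]
  have h22 : B 2 ⬝ᵥ B 2 = B.det := by rw [← hdet, ← triple_product_permutation, h01]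
  have h01' : B 0 ⬝ᵥ B 1 = 0 := by rw [← h20, dot_cross_self]
  have h12' : B 1 ⬝ᵥ B 2 = 0 := by rw [← h01, dot_cross_self]
  have h20' : B 2 ⬝ᵥ B 0 = 0 := by rw [← h12, dot_cross_self]
  fin_cases i <;> fin_cases j <;>
    simp [dotProduct_comm (B 1) (B 0), dotProduct_comm (B 2) (B 1),
      dotProduct_comm (B 0) (B 2), *]

theorem mul_transpose_eq_det_smul_one_of_cross_cyclic
    (h : ∀ i, B i ⨯₃ B (i + 1) = B (i + 2)) : B * Bᵀ = B.det • 1 := by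
  ext i j
  change B i ⬝ᵥ B j = _
  simpa [one_apply] using dotProduct_rows_of_cross_cyclic h i j

theorem isIdempotentElem_det_of_cross_cyclic (h : ∀ i, B i ⨯₃ B (i + 1) = B (i + 2)) :
    IsIdempotentElem B.det := by
  have hdot := dotProduct_rows_of_cross_cyclic h
  calc B.det * B.det = B 0 ⬝ᵥ B 0 * (B 1 ⬝ᵥ B 1) - B 0 ⬝ᵥ B 1 * (B 1 ⬝ᵥ B 0) := by
        simp [hdot]
    _ = B 2 ⬝ᵥ B 2 := by rw [← cross_dot_cross, show B 0 ⨯₃ B 1 = B 2 from h 0]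
    _ = B.det := by simp [hdot]

end CrossCyclic

theorem cross_single_cyclic (i : Fin 3) :
    (Pi.single i 1 : Fin 3 → R) ⨯₃ Pi.single (i + 1) 1 = Pi.single (i + 2) 1 := by
  ext j; fin_cases i <;> fin_cases j <;> simp [cross_apply]

theorem transpose_toMatrix'_cross_cyclic {f : (Fin 3 → R) →ₗ[R] (Fin 3 → R)}
    (hf : ∀ x y, f (x ⨯₃ y) = f x ⨯₃ f y) (i : Fin 3) :
    (LinearMap.toMatrix' f)ᵀ i ⨯₃ (LinearMap.toMatrix' f)ᵀ (i + 1) =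
      (LinearMap.toMatrix' f)ᵀ (i + 2) := by
  have hrow (k : Fin 3) : (LinearMap.toMatrix' f)ᵀ k = f (Pi.single k 1) :=
    funext fun j => LinearMap.toMatrix'_apply f j k
  rw [hrow, hrow, hrow, ← hf, cross_single_cyclic]

/-- Every Lie algebra automorphism of `ℝ³` with the cross product bracket is
given by an `SO(3)` matrix. -/
theorem stmt4 (f : (Fin 3 → ℝ) →ₗ[ℝ] (Fin 3 → ℝ)) (hbij : Function.Bijective f)
    (hhom : ∀ x y : Fin 3 → ℝ, f (crossProduct x y) = crossProduct (f x) (f y)) :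
    (LinearMap.toMatrix' f)ᵀ * LinearMap.toMatrix' f = 1 ∧
      (LinearMap.toMatrix' f).det = 1 := by
  have hrows := transpose_toMatrix'_cross_cyclic hhom
  have hunit : IsUnit (LinearMap.toMatrix' f)ᵀ.det := by
    rw [det_transpose, LinearMap.det_toMatrix']
    exact (LinearEquiv.ofBijective f hbij).isUnit_det'
  have hdet : (LinearMap.toMatrix' f)ᵀ.det = 1 :=
    (IsIdempotentElem.iff_eq_one_of_isUnit hunit).mp (isIdempotentElem_det_of_cross_cyclic hrows)
  have hgram := mul_transpose_eq_det_smul_one_of_cross_cyclic hrows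
  rw [hdet, one_smul, transpose_transpose] at hgram
  exact ⟨hgram, by rwa [det_transpose] at hdet⟩
end

section
/- Let I¹, I², I³ and J¹, J², J³ be endomorphisms of real vector spaces V and W respectively, each triple satisfying the imaginary quaternion relations Iᵅ ∘ Iᵝ = ∑_γ ε_{αβγ} Iᵞ − δ_{αβ}·id and likewise for J. For any A ∈ SO(3), the endomorphism K = −∑_{α,β} A_{αβ} (Iᵅ ⊗ Jᵝ) of V ⊗ W satisfies K ∘ K = 3·id − 2·K. -/
open Matrix

open TensorProduct

/-!
The columns of `A ∈ SO(3)` form a positively oriented orthonormal frame, so the rotated triple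
`I'ᵝ = ∑_α A_{αβ} Iᵅ` again satisfies the quaternion relations. Inside `End (V ⊗ W)` the
operators `Iᵅ ⊗ 1` and `1 ⊗ Jᵝ` commute and `K = -∑_β (I'ᵝ ⊗ 1)(1 ⊗ Jᵝ)`, which reduces the
claim to `A = 1`. There `P = ∑_β (Iᵝ ⊗ 1)(1 ⊗ Jᵝ)` has `P² = 3 + 2P`: the three diagonal terms
contribute `(-1)(-1)` each, and the off-diagonal pairs `(β, δ)`, `(δ, β)` both contribute
`Iᵞ ⊗ Jᵞ` for the third index `γ`.
-/

theorem Matrix.adjugate_eq_transpose {n α : Type*} [Fintype n] [DecidableEq n] [CommRing α]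
    {A : Matrix n n α} (horth : Aᵀ * A = 1) (hdet : A.det = 1) : A.adjugate = Aᵀ :=
  calc A.adjugate = Aᵀ * A * A.adjugate := by rw [horth, Matrix.one_mul]
    _ = Aᵀ := by rw [Matrix.mul_assoc, Matrix.mul_adjugate, hdet, one_smul, Matrix.mul_one]

/-- Coordinates of the cross-product identity `(A eᵦ) × (A e_δ) = adj(A)ᵀ (eᵦ × e_δ)`. -/
theorem sum_eps3_mul_mul_eq_sum_eps3_mul_adjugate (A : Matrix (Fin 3) (Fin 3) ℝ)
    (μ β δ : Fin 3) :
    ∑ α, ∑ γ, eps3 α γ μ * (A α β * A γ δ) = ∑ ν, eps3 β δ ν * A.adjugate ν μ := by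
  fin_cases μ <;> fin_cases β <;> fin_cases δ <;>
    simp [Fin.sum_univ_three, adjugate_fin_three, eps3] <;> ring

section Quaternion

variable {R : Type*} [Ring R] [Algebra ℝ R]

def IsImagQuaternionTriple (e : Fin 3 → R) : Prop :=
  ∀ α β, e α * e β = ∑ γ, eps3 α β γ • e γ - (if α = β then (1 : ℝ) else 0) • 1

theorem IsImagQuaternionTriple.map {S : Type*} [Ring S] [Algebra ℝ S] {e : Fin 3 → R}
    (he : IsImagQuaternionTriple e) (φ : R →ₐ[ℝ] S) : IsImagQuaternionTriple (φ ∘ e) := by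
  intro α β
  simp only [Function.comp_apply, ← map_mul, he α β, map_sub, map_sum, map_smul, map_one]

theorem IsImagQuaternionTriple.rotate {e : Fin 3 → R} (he : IsImagQuaternionTriple e)
    {A : Matrix (Fin 3) (Fin 3) ℝ} (horth : Aᵀ * A = 1) (hdet : A.det = 1) :
    IsImagQuaternionTriple (fun β => ∑ α, A α β • e α) := by
  intro β δ
  have hcol : ∑ α, A α β * A α δ = if β = δ then 1 else 0 := by
    simpa [Matrix.mul_apply, Matrix.one_apply] using congr_fun₂ horth β δ
  calc (∑ α, A α β • e α) * (∑ γ, A γ δ • e γ)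
      = ∑ α, ∑ γ, (A α β * A γ δ) • (e α * e γ) := by
        simp_rw [Finset.sum_mul_sum, smul_mul_smul]
    _ = ∑ μ, (∑ α, ∑ γ, eps3 α γ μ * (A α β * A γ δ)) • e μ
          - (∑ α, A α β * A α δ) • 1 := by
        simp_rw [he _ _, smul_sub, Finset.sum_sub_distrib, Finset.smul_sum, smul_smul]
        congr 1
        · rw [Finset.sum_comm_cycle]
          simp_rw [Finset.sum_smul, mul_comm (eps3 _ _ _)]
        · simp_rw [← Finset.sum_smul, mul_ite, mul_one, mul_zero, Finset.sum_ite_eq,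
            Finset.mem_univ, if_true]
    _ = ∑ μ, (∑ ν, eps3 β δ ν * A μ ν) • e μ - (if β = δ then (1 : ℝ) else 0) • 1 := by
        simp_rw [hcol, sum_eps3_mul_mul_eq_sum_eps3_mul_adjugate,
          A.adjugate_eq_transpose horth hdet, transpose_apply]
    _ = ∑ ν, eps3 β δ ν • ∑ μ, A μ ν • e μ - (if β = δ then (1 : ℝ) else 0) • 1 := by
        simp_rw [Finset.sum_smul, Finset.smul_sum, smul_smul]
        rw [Finset.sum_comm]

theorem IsImagQuaternionTriple.sum_mul_self {e f : Fin 3 → R} (he : IsImagQuaternionTriple e)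
    (hf : IsImagQuaternionTriple f) (hcomm : ∀ α β, Commute (e α) (f β)) :
    (∑ β, e β * f β) * (∑ β, e β * f β) = (3 : ℝ) • 1 + (2 : ℝ) • ∑ β, e β * f β := by
  have hswap : ∀ β δ, e β * f β * (e δ * f δ) = e β * e δ * (f β * f δ) := fun β δ =>
    (hcomm δ β).symm.mul_mul_mul_comm _ _
  unfold IsImagQuaternionTriple at he hf
  simp_rw [Finset.sum_mul_sum, hswap, he, hf]
  simp only [Fin.sum_univ_three, eps3, Fin.reduceEq, ite_true, ite_false]
  norm_num
  module

end Quaternion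

/-- If `Iᵅ` on `V` and `Jᵝ` on `W` satisfy the imaginary quaternion relations
and `A ∈ SO(3)`, then `K = −∑ A_{αβ} Iᵅ ⊗ Jᵝ` satisfies `K² = 3·id − 2·K`. -/
theorem stmt7 {V W : Type*} [AddCommGroup V] [Module ℝ V]
    [AddCommGroup W] [Module ℝ W]
    (I : Fin 3 → V →ₗ[ℝ] V) (J : Fin 3 → W →ₗ[ℝ] W)
    (hI : ∀ α β, I α ∘ₗ I β =
      (∑ γ, eps3 α β γ • I γ) - (if α = β then (1 : ℝ) else 0) • LinearMap.id)
    (hJ : ∀ α β, J α ∘ₗ J β =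
      (∑ γ, eps3 α β γ • J γ) - (if α = β then (1 : ℝ) else 0) • LinearMap.id)
    (A : Matrix (Fin 3) (Fin 3) ℝ) (horth : Aᵀ * A = 1) (hdet : A.det = 1)
    (K : V ⊗[ℝ] W →ₗ[ℝ] V ⊗[ℝ] W)
    (hKdef : K = -∑ α, ∑ β, A α β • TensorProduct.map (I α) (J β)) :
    K ∘ₗ K = (3 : ℝ) • LinearMap.id - (2 : ℝ) • K := by
  let e : Fin 3 → Module.End ℝ (V ⊗[ℝ] W) := fun α => (I α).rTensor W
  let f : Fin 3 → Module.End ℝ (V ⊗[ℝ] W) := fun β => (J β).lTensor V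
  let e' : Fin 3 → Module.End ℝ (V ⊗[ℝ] W) := fun β => ∑ α, A α β • e α
  have he' : IsImagQuaternionTriple e' :=
    ((show IsImagQuaternionTriple I from hI).map (Module.End.rTensorAlgHom ℝ V W)).rotate
      horth hdet
  have hf : IsImagQuaternionTriple f :=
    (show IsImagQuaternionTriple J from hJ).map (Module.End.lTensorAlgHom ℝ W V)
  have hcomm : ∀ α β, Commute (e' α) (f β) := fun α β =>
    Commute.sum_left _ _ _ fun γ _ =>
      (show Commute (e γ) (f β) from (LinearMap.rTensor_comp_lTensor (f := I γ) (g := J β)).trans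
        (LinearMap.lTensor_comp_rTensor (f := I γ) (g := J β)).symm).smul_left _
  set P : Module.End ℝ (V ⊗[ℝ] W) := ∑ β, e' β * f β
  have hK : K = -P := by
    simp_rw [hKdef, P, e', Finset.sum_mul, smul_mul_assoc, Module.End.mul_eq_comp, e, f,
      LinearMap.rTensor_comp_lTensor]
    rw [Finset.sum_comm]
  have hKK : K ∘ₗ K = P * P := by
    rw [hK]
    exact neg_mul_neg P P
  rw [hKK, he'.sum_mul_self hf hcomm, hK, Module.End.one_eq_id]
  module
end

section
/- Let Ω be the Cayley 4-form on ℝ⁸, Ω = e^{1234} + e^{1258} − e^{1267} + e^{1357} + e^{1368} − e^{1456} + e^{1478} + e^{2356} − e^{2378} + e^{2457} + e^{2468} − e^{3458} + e^{3467} + e^{5678}. Define on ℝ⁴ × ℝ⁴ the anti-self-dual 2-forms Iᵅ on the first factor (I¹ = e^{12} − e^{34}, I² = e^{13} + e^{24}, I³ = e^{14} − e^{23}) and Îᵅ on the second factor (Î¹ = e^{56} − e^{78}, Î² = e^{57} + e^{68}, Î³ = e^{58} − e^{67}). Then Ω = −(1/6) ∑_α Iᵅ∧Iᵅ − (1/6)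 ∑_α Îᵅ∧Îᵅ + ∑_{α,β} A_{αβ} Iᵅ∧Îᵝ, where A is the SO(3) matrix with rows (0,0,1), (0,1,0), (−1,0,0). -/
open Matrix

open ExteriorAlgebra

/-- The standard basis 1-vectors of `ℝ⁸` inside the exterior algebra
(0-based: `e 0, …, e 7` correspond to `e¹, …, e⁸`). -/
noncomputable def e (a : Fin 8) : ExteriorAlgebra ℝ (Fin 8 → ℝ) :=
  ExteriorAlgebra.ι ℝ (Pi.single a 1)

/-- The Cayley 4-form on `ℝ⁸` (as an element of the exterior algebra). -/
noncomputable def CayleyOmega : ExteriorAlgebra ℝ (Fin 8 → ℝ) :=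
  e 0 * e 1 * e 2 * e 3 + e 0 * e 1 * e 4 * e 7 - e 0 * e 1 * e 5 * e 6 +
    e 0 * e 2 * e 4 * e 6 + e 0 * e 2 * e 5 * e 7 - e 0 * e 3 * e 4 * e 5 +
    e 0 * e 3 * e 6 * e 7 + e 1 * e 2 * e 4 * e 5 - e 1 * e 2 * e 6 * e 7 +
    e 1 * e 3 * e 4 * e 6 + e 1 * e 3 * e 5 * e 7 - e 2 * e 3 * e 4 * e 7 +
    e 2 * e 3 * e 5 * e 6 + e 4 * e 5 * e 6 * e 7

/-- The anti-self-dual 2-forms on the first `ℝ⁴` factor: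
`I¹ = e^{12} − e^{34}`, `I² = e^{13} + e^{24}`, `I³ = e^{14} − e^{23}`. -/
noncomputable def Iv : Fin 3 → ExteriorAlgebra ℝ (Fin 8 → ℝ) :=
  ![e 0 * e 1 - e 2 * e 3, e 0 * e 2 + e 1 * e 3, e 0 * e 3 - e 1 * e 2]

/-- The anti-self-dual 2-forms on the second `ℝ⁴` factor:
`Î¹ = e^{56} − e^{78}`, `Î² = e^{57} + e^{68}`, `Î³ = e^{58} − e^{67}`. -/
noncomputable def Jv : Fin 3 → ExteriorAlgebra ℝ (Fin 8 → ℝ) :=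
  ![e 4 * e 5 - e 6 * e 7, e 4 * e 6 + e 5 * e 7, e 4 * e 7 - e 5 * e 6]

/-- The `SO(3)` matrix appearing in the decomposition of the Cayley form. -/
noncomputable def Amat : Matrix (Fin 3) (Fin 3) ℝ := !![0, 0, 1; 0, 1, 0; -1, 0, 0]

/-! Each `Iᵅ` is `p ± q` for two commuting 2-blades `p`, `q` of square zero, so `(Iᵅ)² = ±2 p q`,
and reordering the four 1-vectors shows that all three squares equal `−2 e^{1234}`; likewise all
`(Îᵅ)²` equal `−2 e^{5678}`. Hence the two `−1/6`-terms are exactly `e^{1234} + e^{5678}`, and the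
other twelve terms of `Ω` are the expansion of the mixed sum, in which no reordering occurs since
every index of `Iᵅ` precedes every index of `Îᵝ`. -/

namespace ExteriorAlgebra

variable {R M : Type*} [CommRing R] [AddCommGroup M] [Module R M]

theorem ι_mul_ι_eq_neg_ι_mul_ι (u v : M) : ι R u * ι R v = -(ι R v * ι R u) :=
  eq_neg_of_add_eq_zero_left (ι_add_mul_swap u v)

theorem commute_ι_mul_ι_ι (u v w : M) : Commute (ι R u * ι R v) (ι R w) := by
  rw [Commute, SemiconjBy, mul_assoc, ι_mul_ι_eq_neg_ι_mul_ι v w, mul_neg, ← mul_assoc,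
    ι_mul_ι_eq_neg_ι_mul_ι u w, neg_mul, neg_neg, mul_assoc]

theorem commute_ι_mul_ι (u v w x : M) : Commute (ι R u * ι R v) (ι R w * ι R x) :=
  (commute_ι_mul_ι_ι u v w).mul_right (commute_ι_mul_ι_ι u v x)

theorem ι_mul_ι_mul_self (u v : M) : ι R u * ι R v * (ι R u * ι R v) = 0 := by
  rw [← mul_assoc, (commute_ι_mul_ι_ι u v u).eq, ← mul_assoc, ι_sq_zero, zero_mul, zero_mul]

def antiSelfDualForms (v : Fin 4 → M) : Fin 3 → ExteriorAlgebra R M :=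
  ![ι R (v 0) * ι R (v 1) - ι R (v 2) * ι R (v 3),
    ι R (v 0) * ι R (v 2) + ι R (v 1) * ι R (v 3),
    ι R (v 0) * ι R (v 3) - ι R (v 1) * ι R (v 2)]

theorem sum_antiSelfDualForms_mul_self (v : Fin 4 → M) :
    ∑ α, antiSelfDualForms v α * antiSelfDualForms v α =
      (-6 : R) • (ι R (v 0) * ι R (v 1) * ι R (v 2) * ι R (v 3)) := by
  have sq_sub (p q : ExteriorAlgebra R M) (h : Commute p q) (hp : p * p = 0) (hq : q * q = 0) :
      (p - q) * (p - q) = (-2 : R) • (p * q) := by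
    rw [mul_sub, sub_mul, sub_mul, hp, hq, h.eq]; module
  have sq_add (p q : ExteriorAlgebra R M) (h : Commute p q) (hp : p * p = 0) (hq : q * q = 0) :
      (p + q) * (p + q) = (2 : R) • (p * q) := by
    rw [mul_add, add_mul, add_mul, hp, hq, h.eq]; module
  simp only [Fin.sum_univ_three, antiSelfDualForms, Matrix.cons_val]
  rw [sq_sub _ _ (commute_ι_mul_ι ..) (ι_mul_ι_mul_self ..) (ι_mul_ι_mul_self ..),
    sq_add _ _ (commute_ι_mul_ι ..) (ι_mul_ι_mul_self ..) (ι_mul_ι_mul_self ..),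
    sq_sub _ _ (commute_ι_mul_ι ..) (ι_mul_ι_mul_self ..) (ι_mul_ι_mul_self ..)]
  have reorder₁ : ι R (v 0) * ι R (v 2) * (ι R (v 1) * ι R (v 3)) =
      -(ι R (v 0) * ι R (v 1) * ι R (v 2) * ι R (v 3)) := by
    rw [← mul_assoc, mul_assoc (ι R (v 0)), ι_mul_ι_eq_neg_ι_mul_ι (v 2), mul_neg, neg_mul,
      ← mul_assoc]
  have reorder₂ : ι R (v 0) * ι R (v 3) * (ι R (v 1) * ι R (v 2)) =
      ι R (v 0) * ι R (v 1) * ι R (v 2) * ι R (v 3) := by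
    rw [mul_assoc, ← (commute_ι_mul_ι_ι (v 1) (v 2) (v 3)).eq]
    simp only [← mul_assoc]
  rw [reorder₁, reorder₂]
  simp only [← mul_assoc]
  module

end ExteriorAlgebra

-- `Iv` and `Jv` are definitionally the `antiSelfDualForms` of the frames `e 0, …, e 3`
-- and `e 4, …, e 7`.
theorem sum_Iv_mul_self : ∑ α, Iv α * Iv α = (-6 : ℝ) • (e 0 * e 1 * e 2 * e 3) :=
  sum_antiSelfDualForms_mul_self fun i => Pi.single (Fin.castAdd 4 i) 1

theorem sum_Jv_mul_self : ∑ α, Jv α * Jv α = (-6 : ℝ) • (e 4 * e 5 * e 6 * e 7) :=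
  sum_antiSelfDualForms_mul_self fun i => Pi.single (Fin.natAdd 4 i) 1

theorem sum_Amat_smul_Iv_mul_Jv :
    ∑ α, ∑ β, Amat α β • (Iv α * Jv β) =
      CayleyOmega - e 0 * e 1 * e 2 * e 3 - e 4 * e 5 * e 6 * e 7 := by
  simp only [Fin.sum_univ_three, Amat, Iv, Jv, CayleyOmega, Matrix.of_apply, Matrix.cons_val,
    mul_sub, sub_mul, mul_add, add_mul, ← mul_assoc]
  module

/-- Decomposition of the Cayley 4-form:
`Ω = −(1/6) ∑ Iᵅ∧Iᵅ − (1/6) ∑ Îᵅ∧Îᵅ + ∑ A_{αβ} Iᵅ∧Îᵝ`. -/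
theorem stmt11 :
    CayleyOmega =
      (-(1 / 6 : ℝ)) • (∑ α, Iv α * Iv α) +
        (-(1 / 6 : ℝ)) • (∑ α, Jv α * Jv α) +
        ∑ α, ∑ β, Amat α β • (Iv α * Jv β) := by
  rw [sum_Iv_mul_self, sum_Jv_mul_self, sum_Amat_smul_Iv_mul_Jv]
  module
end
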